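/- Let z_1,…,z_{2n} be a representation of the quantum quaternion sphere relations on a complex Hilbert space H, and write ω = z_{2n}* z_{2n}. If u ∈ H is a nonzero vector with ω u = q^{2m} u for some m ∈ ℕ, then z_i u ≠ 0 for every i with 1 ≤ i ≤ 2n−1. -/

import Mathlib

/-!
If `z i u = 0`, then `⟪z i* z i u, u⟫ = 0`; by (R6)/(R7) the operator `z i* z i` dominates
`(1 - q²) z (2n) z (2n)*`, so `z (2n)* u = 0`. Since (R6) makes `z (2n)` normal,
`ω u = z (2n) z (2n)* u = 0`, impossible for an eigenvector with eigenvalue `q^(2m) ≠ 0`.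
-/

noncomputable section

variable {H : Type*} [NormedAddCommGroup H] [InnerProductSpace ℂ H] [CompleteSpace H]

/-- The adjoint of a bounded operator on a complex Hilbert space. -/
def adj (T : H →L[ℂ] H) : H →L[ℂ] H := ContinuousLinearMap.adjoint T

/-- `i′ = 2n + 1 − i`. -/
def dualIdx (n i : ℕ) : ℕ := 2 * n + 1 - i

/-- `ρ_i = n + 1 − i` for `i ≤ n`, and `ρ_i = n − i` (that is, `−ρ_{i′}`) for `i > n`. -/
def rhoIdx (n i : ℕ) : ℤ := if i ≤ n then (n : ℤ) + 1 - (i : ℤ) else (n : ℤ) - (i : ℤ)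

/-- `ε_i = 1` for `i ≤ n`, `ε_i = −1` for `i > n`. -/
def epsIdx (n i : ℕ) : ℤ := if i ≤ n then 1 else -1

/-- A representation of the quantum quaternion sphere relations on a complex Hilbert
space `H`: bounded operators `z 1, …, z (2n)` satisfying relations (R1)–(R8). -/
structure QQSRep (q : ℝ) (n : ℕ) (z : ℕ → H →L[ℂ] H) : Prop where
  r1 : ∀ i j, 1 ≤ j → j < i → i ≤ 2 * n → i + j ≠ 2 * n + 1 →
      z i * z j = (q : ℂ) • (z j * z i)
  r2 : ∀ i, n < i → i ≤ 2 * n →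
      z i * z (dualIdx n i) = ((q : ℂ) ^ 2) • (z (dualIdx n i) * z i)
        - ((1 - q ^ 2 : ℝ) : ℂ) • ∑ k ∈ Finset.Ioc i (2 * n),
            ((q : ℂ) ^ ((i : ℤ) - (k : ℤ))) • (z k * z (dualIdx n k))
  r3 : ∀ i, 1 ≤ i → i ≤ 2 * n →
      adj (z i) * z (dualIdx n i) = ((q : ℂ) ^ 2) • (z (dualIdx n i) * adj (z i))
  r4 : ∀ i j, 1 ≤ i → i ≤ 2 * n → 1 ≤ j → j ≤ 2 * n → 2 * n + 1 < i + j → i ≠ j →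
      adj (z i) * z j = (q : ℂ) • (z j * adj (z i))
  r5 : ∀ i j, 1 ≤ i → 1 ≤ j → i + j < 2 * n + 1 → i ≠ j →
      adj (z i) * z j = (q : ℂ) • (z j * adj (z i))
        + (((1 - q ^ 2 : ℝ) : ℂ) * ((epsIdx n i * epsIdx n j : ℤ) : ℂ)
            * (q : ℂ) ^ (rhoIdx n i + rhoIdx n j)) • (z (dualIdx n i) * adj (z (dualIdx n j)))
  r6 : ∀ i, n < i → i ≤ 2 * n →
      adj (z i) * z i = z i * adj (z i)
        + ((1 - q ^ 2 : ℝ) : ℂ) • ∑ k ∈ Finset.Ioc i (2 * n), z k * adj (z k)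
  r7 : ∀ i, 1 ≤ i → i ≤ n →
      adj (z i) * z i = z i * adj (z i)
        + (((1 - q ^ 2 : ℝ) : ℂ) * (q : ℂ) ^ (2 * rhoIdx n i)) •
            (z (dualIdx n i) * adj (z (dualIdx n i)))
        + ((1 - q ^ 2 : ℝ) : ℂ) • ∑ k ∈ Finset.Ioc i (2 * n), z k * adj (z k)
  r8 : ∑ i ∈ Finset.Icc 1 (2 * n), z i * adj (z i) = 1

/-- Irreducibility: the only closed subspaces invariant under all `z i` and `(z i)*`
are `{0}` and `H`. -/
def QQSIrreducible (n : ℕ) (z : ℕ → H →L[ℂ] H) : Prop :=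
  ∀ K : Submodule ℂ H, IsClosed (K : Set H) →
    (∀ i, 1 ≤ i → i ≤ 2 * n → ∀ h ∈ K, z i h ∈ K ∧ adj (z i) h ∈ K) →
    K = ⊥ ∨ K = ⊤


open ContinuousLinearMap ComplexOrder

lemma adj_apply_eq_zero_of_smul_le_adj_mul_self {S T : H →L[ℂ] H} {c : ℝ} (hc : 0 < c)
    (hle : (c : ℂ) • (T * adj T) ≤ adj S * S) {u : H} (hu : S u = 0) : adj T u = 0 := by
  have hre := ((le_def _ _).mp hle).re_inner_nonneg_right u
  have hTu : inner ℂ u (T (adj T u)) = ((‖adj T u‖ ^ 2 : ℝ) : ℂ) := by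
    rw [← adjoint_inner_left, ← adj, inner_self_eq_norm_sq_to_K]
    norm_cast
  simp only [sub_apply, smul_apply, mul_apply_eq_comp, hu, map_zero, inner_neg_right,
    inner_smul_right, hTu, zero_sub, map_neg, ← Complex.ofReal_mul, Left.nonneg_neg_iff] at hre
  exact norm_eq_zero.mp (pow_eq_zero_iff two_ne_zero |>.mp
    (le_antisymm (nonpos_of_mul_nonpos_right hre hc) (sq_nonneg _)))

namespace QQSRep

variable {q : ℝ} {n : ℕ} {z : ℕ → H →L[ℂ] H}

lemma adj_mul_self_two_mul (hz : QQSRep q n z) (hn : 1 ≤ n) :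
    adj (z (2 * n)) * z (2 * n) = z (2 * n) * adj (z (2 * n)) := by
  simpa using hz.r6 (2 * n) (by omega) le_rfl

/-- (R6) and (R7) exhibit `z i* z i` as a positive combination of the `z k z k*`, `k ≥ i`,
in which `z (2n) z (2n)*` has coefficient `1 - q²`. -/
lemma smul_mul_adj_two_mul_le_adj_mul_self (hz : QQSRep q n z) (hq : q ^ 2 ≤ 1) {i : ℕ}
    (hi1 : 1 ≤ i) (hi : i < 2 * n) :
    ((1 - q ^ 2 : ℝ) : ℂ) • (z (2 * n) * adj (z (2 * n))) ≤ adj (z i) * z i := by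
  have smul_nonneg {c : ℂ} (hc : 0 ≤ c) {A : H →L[ℂ] H} (hA : 0 ≤ A) : 0 ≤ c • A := by
    rw [nonneg_iff_isPositive] at hA ⊢
    exact hA.smul_of_nonneg hc
  have hc : (0 : ℂ) ≤ ((1 - q ^ 2 : ℝ) : ℂ) := Complex.zero_le_real.mpr (by linarith)
  have hpos (k : ℕ) : 0 ≤ z k * adj (z k) :=
    (nonneg_iff_isPositive _).mpr (isPositive_self_comp_adjoint _)
  have hsum : ((1 - q ^ 2 : ℝ) : ℂ) • (z (2 * n) * adj (z (2 * n)))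
      ≤ ((1 - q ^ 2 : ℝ) : ℂ) • ∑ k ∈ Finset.Ioc i (2 * n), z k * adj (z k) := by
    rw [le_def, ← smul_sub, ← nonneg_iff_isPositive]
    refine smul_nonneg hc (sub_nonneg.mpr ?_)
    exact Finset.single_le_sum (fun k _ => hpos k) (Finset.mem_Ioc.mpr ⟨hi, le_rfl⟩)
  by_cases hni : n < i
  · rw [hz.r6 i hni hi.le]
    exact hsum.trans (le_add_of_nonneg_left (hpos i))
  · have hq' : (0 : ℂ) ≤ (q : ℂ) ^ (2 * rhoIdx n i) := by
      rw [← Complex.ofReal_zpow]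
      exact Complex.zero_le_real.mpr ((even_two_mul _).zpow_nonneg q)
    rw [hz.r7 i hi1 (not_lt.mp hni)]
    exact hsum.trans (le_add_of_nonneg_left
      (add_nonneg (hpos i) (smul_nonneg (mul_nonneg hc hq') (hpos _))))

end QQSRep

theorem stmt_7_general (q : ℝ) (hq0 : 0 < q) (hq1 : q < 1) (n : ℕ)
    (z : ℕ → H →L[ℂ] H) (hz : QQSRep q n z) :
    ∀ (m : ℕ) (u : H), u ≠ 0 →
      (adj (z (2 * n)) * z (2 * n)) u = ((q ^ (2 * m) : ℝ) : ℂ) • u →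
      ∀ i, 1 ≤ i → i ≤ 2 * n - 1 → z i u ≠ 0 := by
  intro m u hu hω i hi1 hi2 hzi
  have hq : q ^ 2 < 1 := by nlinarith
  have hadj : adj (z (2 * n)) u = 0 :=
    adj_apply_eq_zero_of_smul_le_adj_mul_self (sub_pos.mpr hq)
      (hz.smul_mul_adj_two_mul_le_adj_mul_self hq.le hi1 (by omega)) hzi
  have hω0 : ((q ^ (2 * m) : ℝ) : ℂ) • u = 0 := by
    rw [← hω, hz.adj_mul_self_two_mul (by omega), mul_apply_eq_comp, hadj, map_zero]
  exact hu ((smul_eq_zero.mp hω0).resolve_left (by exact_mod_cast pow_ne_zero _ hq0.ne'))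

theorem stmt_7 (q : ℝ) (hq0 : 0 < q) (hq1 : q < 1) (n : ℕ) (hn : 1 ≤ n)
    (z : ℕ → H →L[ℂ] H) (hz : QQSRep q n z) :
    ∀ (m : ℕ) (u : H), u ≠ 0 →
      (adj (z (2 * n)) * z (2 * n)) u = ((q ^ (2 * m) : ℝ) : ℂ) • u →
      ∀ i, 1 ≤ i → i ≤ 2 * n - 1 → z i u ≠ 0 :=
  stmt_7_general q hq0 hq1 n z hz
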